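/- arXiv:2407.14497 — 3 statements merged into one kernel-verified Lean document; each statement's English description precedes it below -/
import Mathlib

section
/- Let μ₂ be a probability measure on unit vectors of ℂ^d satisfying the 2-design property ∫ (|ψ⟩⟨ψ|)^{⊗2} dμ₂ = (I + S)/(d(d+1)), where S is the swap operator on ℂ^d ⊗ ℂ^d. Then for any unitary V, ∫ ‖V|ψ⟩⟨ψ|V† - |ψ⟩⟨ψ|‖₂² dμ₂(ψ) = (2d² - 2|Tr V|²)/(d(d+1)). -/
open Matrix MeasureTheory Kronecker

attribute [local instance] Matrix.normedAddCommGroup Matrix.normedSpace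

/-- The rank-one projector `|ψ⟩⟨ψ|`. -/
noncomputable def proj {d : ℕ} (ψ : EuclideanSpace ℂ (Fin d)) :
    Matrix (Fin d) (Fin d) ℂ :=
  Matrix.of fun i j => ψ i * (starRingEnd ℂ) (ψ j)

/-- The swap operator `S` on `ℂ^d ⊗ ℂ^d`, given by `S(u ⊗ v) = v ⊗ u`. -/
def swapOp (d : ℕ) : Matrix (Fin d × Fin d) (Fin d × Fin d) ℂ :=
  Matrix.of fun p q => if p.1 = q.2 ∧ p.2 = q.1 then 1 else 0

/-- Schatten 2-norm (Frobenius norm) of a square complex matrix. -/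
noncomputable def schatten2 {d : ℕ} (A : Matrix (Fin d) (Fin d) ℂ) : ℝ :=
  Real.sqrt ((A * Aᴴ).trace.re)

lemma trace_kron_swap {d : ℕ} (A B : Matrix (Fin d) (Fin d) ℂ) :
    ((A ⊗ₖ B) * swapOp d).trace = (A * B).trace := by
  simp only [Matrix.trace, Matrix.diag, Matrix.mul_apply, swapOp, Matrix.kroneckerMap_apply,
    Matrix.of_apply]
  rw [Fintype.sum_prod_type]
  simp [Fintype.sum_prod_type, ite_and, Finset.mul_sum, mul_ite, Finset.sum_ite_eq,
    Finset.sum_ite_eq', mul_comm]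

lemma swap_mul_kron {d : ℕ} (A B : Matrix (Fin d) (Fin d) ℂ) :
    swapOp d * (A ⊗ₖ B) = (B ⊗ₖ A) * swapOp d := by
  ext p q
  simp only [Matrix.mul_apply, swapOp, Matrix.of_apply, Matrix.kroneckerMap_apply,
    Fintype.sum_prod_type, ite_and, mul_ite, ite_mul, mul_one, one_mul, mul_zero, zero_mul,
    Finset.sum_ite_eq, Finset.sum_ite_eq', Finset.mem_univ, if_true]
  rw [Finset.sum_comm]
  simp [Finset.sum_ite_eq, Finset.sum_ite_eq', mul_comm]

lemma swap_mul_swap (d : ℕ) : swapOp d * swapOp d = 1 := by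
  ext p q
  simp only [Matrix.mul_apply, swapOp, Matrix.of_apply, Fintype.sum_prod_type, ite_and,
    mul_ite, ite_mul, mul_one, one_mul, mul_zero, zero_mul, Finset.sum_ite_eq,
    Finset.sum_ite_eq', Finset.mem_univ, if_true, Matrix.one_apply, Prod.ext_iff]
  aesop

lemma trace_swap (d : ℕ) : (swapOp d).trace = d := by
  simp [Matrix.trace, Matrix.diag, swapOp, Fintype.sum_prod_type, ite_and, Finset.sum_ite_eq,
    eq_comm (a := (_ : Fin d))]

lemma trace_mul_conjTranspose_re_nonneg {n : Type*} [Fintype n] (A : Matrix n n ℂ) :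
    0 ≤ (A * Aᴴ).trace.re := by
  simp only [Matrix.trace, Matrix.diag, Matrix.mul_apply, Matrix.conjTranspose_apply,
    Complex.re_sum]
  refine Finset.sum_nonneg fun i _ => Finset.sum_nonneg fun j _ => ?_
  rw [show star (A i j) = starRingEnd ℂ (A i j) from rfl, Complex.mul_conj]
  simpa using Complex.normSq_nonneg (A i j)

lemma proj_herm {d : ℕ} (ψ : EuclideanSpace ℂ (Fin d)) : (proj ψ)ᴴ = proj ψ := by
  ext i j
  simp [proj, Matrix.conjTranspose_apply, mul_comm]

lemma pointwise {d : ℕ} (ψ : EuclideanSpace ℂ (Fin d)) (V : Matrix (Fin d) (Fin d) ℂ)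
    (hV : V * Vᴴ = 1 ∧ Vᴴ * V = 1) :
    (schatten2 (V * proj ψ * Vᴴ - proj ψ)) ^ 2
      = (2 * (proj ψ * proj ψ).trace - 2 * (V * proj ψ * Vᴴ * proj ψ).trace).re := by
  set P := proj ψ
  have hP : Pᴴ = P := proj_herm ψ
  have hA : (V * P * Vᴴ - P)ᴴ = V * P * Vᴴ - P := by
    simp [Matrix.conjTranspose_sub, Matrix.conjTranspose_mul, hP, Matrix.mul_assoc]
  rw [schatten2, Real.sq_sqrt (trace_mul_conjTranspose_re_nonneg _), hA]
  congr 1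
  have expand : (V * P * Vᴴ - P) * (V * P * Vᴴ - P)
      = V * P * Vᴴ * (V * P * Vᴴ) - V * P * Vᴴ * P - P * (V * P * Vᴴ) + P * P := by
    noncomm_ring
  rw [expand]
  have h1 : (V * P * Vᴴ * (V * P * Vᴴ)).trace = (P * P).trace := by
    have : V * P * Vᴴ * (V * P * Vᴴ) = V * (P * P) * Vᴴ := by
      rw [show V * P * Vᴴ * (V * P * Vᴴ) = V * P * (Vᴴ * V) * P * Vᴴ by
        simp [Matrix.mul_assoc], hV.2]
      simp [Matrix.mul_assoc]
    rw [this, Matrix.trace_mul_comm, ← Matrix.mul_assoc, hV.2, Matrix.one_mul]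
  have h2 : (P * (V * P * Vᴴ)).trace = (V * P * Vᴴ * P).trace := Matrix.trace_mul_comm _ _
  simp only [Matrix.trace_add, Matrix.trace_sub, h1, h2]
  ring

/-- For a 2-design measure `μ₂` on unit vectors of `ℂ^d`
(`∫ (|ψ⟩⟨ψ|)^{⊗2} dμ₂ = (I + S)/(d(d+1))`) and any unitary `V`,
`∫ ‖V|ψ⟩⟨ψ|Vᴴ - |ψ⟩⟨ψ|‖₂² dμ₂ = (2d² - 2|Tr V|²)/(d(d+1))`. -/
theorem stmt_11 {d : ℕ} [MeasurableSpace (EuclideanSpace ℂ (Fin d))]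
    [BorelSpace (EuclideanSpace ℂ (Fin d))]
    (μ : Measure (EuclideanSpace ℂ (Fin d)))
    [IsProbabilityMeasure μ] (hunit : ∀ᵐ ψ ∂μ, ‖ψ‖ = 1)
    (hdesign : (∫ ψ, (proj ψ) ⊗ₖ (proj ψ) ∂μ)
      = ((d : ℂ) * (d + 1))⁻¹ • (1 + swapOp d))
    (V : Matrix (Fin d) (Fin d) ℂ) (hV : V * Vᴴ = 1 ∧ Vᴴ * V = 1) :
    (∫ ψ, (schatten2 (V * proj ψ * Vᴴ - proj ψ)) ^ 2 ∂μ)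
      = (2 * d ^ 2 - 2 * ‖V.trace‖ ^ 2) / (d * (d + 1)) := by
  classical
  by_cases hd : d = 0
  · subst hd
    have h0 : ∀ ψ : EuclideanSpace ℂ (Fin 0),
        (schatten2 (V * proj ψ * Vᴴ - proj ψ)) ^ 2 = 0 := fun ψ => by
      simp [schatten2, Matrix.trace]
    simp only [h0, integral_zero]
    simp [Matrix.trace]
  · have hdC : (d : ℂ) ≠ 0 := Nat.cast_ne_zero.2 hd
    have hc : ((d : ℂ) * (d + 1)) ≠ 0 := by
      refine mul_ne_zero hdC ?_
      exact_mod_cast (Nat.cast_ne_zero (R := ℂ)).2 (Nat.succ_ne_zero d)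
    by_cases hInt : @Integrable _ PseudoMetricSpace.toUniformSpace.toTopologicalSpace
        SeminormedAddGroup.toContinuousENorm _ _ (fun ψ => (proj ψ) ⊗ₖ (proj ψ)) μ
    · set L0 : Matrix (Fin d × Fin d) (Fin d × Fin d) ℂ →ₗ[ℂ] ℂ :=
        { toFun := fun X => 2 * (X * swapOp d).trace - 2 * ((V ⊗ₖ Vᴴ) * swapOp d * X).trace
          map_add' := fun X Y => by
            simp only [Matrix.add_mul, Matrix.mul_add, Matrix.trace_add]; ring
          map_smul' := fun a X => by
            simp only [Matrix.smul_mul, Matrix.mul_smul, Matrix.trace_smul, smul_eq_mul,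
              RingHom.id_apply]; ring } with hL0
      set L := LinearMap.toContinuousLinearMap L0 with hL
      have hLapply : ∀ X, L X
          = 2 * (X * swapOp d).trace - 2 * ((V ⊗ₖ Vᴴ) * swapOp d * X).trace := fun X => rfl
      have hpt : ∀ ψ : EuclideanSpace ℂ (Fin d),
          (schatten2 (V * proj ψ * Vᴴ - proj ψ)) ^ 2
            = (L ((proj ψ) ⊗ₖ (proj ψ))).re := by
        intro ψ
        rw [pointwise ψ V hV]
        congr 1
        have e1 : ((proj ψ ⊗ₖ proj ψ) * swapOp d).trace = (proj ψ * proj ψ).trace :=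
          trace_kron_swap _ _
        have e2 : ((V ⊗ₖ Vᴴ) * swapOp d * (proj ψ ⊗ₖ proj ψ)).trace
            = (V * proj ψ * Vᴴ * proj ψ).trace := by
          rw [Matrix.mul_assoc, swap_mul_kron, ← Matrix.mul_assoc,
            ← Matrix.mul_kronecker_mul, trace_kron_swap]
          simp [Matrix.mul_assoc]
        rw [hLapply, e1, e2]
      rw [show (fun ψ => (schatten2 (V * proj ψ * Vᴴ - proj ψ)) ^ 2)
          = fun ψ => (L ((proj ψ) ⊗ₖ (proj ψ))).re from funext hpt]
      have hre : ∫ ψ, (L ((proj ψ) ⊗ₖ (proj ψ))).re ∂μ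
          = (∫ ψ, L ((proj ψ) ⊗ₖ (proj ψ)) ∂μ).re :=
        integral_re (L.integrable_comp hInt)
      rw [hre]
      erw [L.integral_comp_comm hInt, hdesign]
      -- now compute L (c⁻¹ • (1 + swapOp d))
      have t1 : ((1 + swapOp d) * swapOp d).trace = (d : ℂ) + (d : ℂ) * d := by
        rw [Matrix.add_mul, Matrix.one_mul, swap_mul_swap, Matrix.trace_add, trace_swap,
          Matrix.trace_one]
        simp
      have t2 : ((V ⊗ₖ Vᴴ) * swapOp d * (1 + swapOp d)).trace
          = (d : ℂ) + V.trace * star V.trace := by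
        rw [Matrix.mul_add, Matrix.mul_one, Matrix.mul_assoc, swap_mul_swap, Matrix.mul_one,
          Matrix.trace_add, trace_kron_swap, hV.1, Matrix.trace_one, Matrix.trace_kronecker,
          Matrix.trace_conjTranspose]
        simp
      erw [L.map_smul]
      rw [smul_eq_mul, hLapply, t1, t2]
      have hz : V.trace * star V.trace = ((‖V.trace‖ ^ 2 : ℝ) : ℂ) := by
        rw [Complex.sq_norm]
        exact Complex.mul_conj _
      rw [hz]
      have key : ((d : ℂ) * (d + 1))⁻¹
            * (2 * ((d : ℂ) + (d : ℂ) * d) - 2 * ((d : ℂ) + ((‖V.trace‖ ^ 2 : ℝ) : ℂ)))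
          = (((2 * d ^ 2 - 2 * ‖V.trace‖ ^ 2) / (d * (d + 1)) : ℝ) : ℂ) := by
        push_cast
        field_simp
        ring
      rw [key, Complex.ofReal_re]
    · exfalso
      rw [integral_undef hInt] at hdesign
      have i0 : Fin d := ⟨0, Nat.pos_of_ne_zero hd⟩
      have h00 := congrFun (congrFun hdesign (i0, i0)) (i0, i0)
      simp only [Matrix.zero_apply, Matrix.smul_apply, Matrix.add_apply, Matrix.one_apply_eq,
        swapOp, Matrix.of_apply, and_self, if_true, smul_eq_mul] at h00
      have : ((d : ℂ) * (d + 1))⁻¹ * 2 = 0 := by simpa using h00.symm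
      rcases mul_eq_zero.1 this with h | h
      · exact hc (inv_eq_zero.1 h)
      · norm_num at h
end

section
/- Let U₀, U be d×d unitaries, O a d×d Hermitian matrix, r a positive integer, and μ₂ a 2-design measure on unit vectors. Then ∫ |⟨ψ| U₀^r O (U₀†)^r |ψ⟩ - ⟨ψ| U^r O (U†)^r |ψ⟩| dμ₂(ψ) ≤ √2 r ‖O‖₂ ‖M‖₂ / √(d(d+1)), where M = U₀† U - I. -/
open Matrix MeasureTheory

/-- The quadratic form `⟨ψ|A|ψ⟩ = ∑ᵢⱼ conj(ψᵢ) Aᵢⱼ ψⱼ`. -/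
noncomputable def qform {d : ℕ} (A : Matrix (Fin d) (Fin d) ℂ)
    (ψ : EuclideanSpace ℂ (Fin d)) : ℂ :=
  ∑ i, ∑ j, (starRingEnd ℂ) (ψ i) * A i j * ψ j

set_option linter.unusedSectionVars false

attribute [local instance] Matrix.frobeniusSeminormedAddCommGroup

section MatrixSide

lemma norm_sq_eq {d : ℕ} (A : Matrix (Fin d) (Fin d) ℂ) :
    ‖A‖ ^ 2 = ∑ i, ∑ j, Complex.normSq (A i j) := by
  rw [Matrix.frobenius_norm_def, ← Real.rpow_natCast _ 2, ← Real.rpow_mul (by positivity)]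
  norm_num
  congr 1; ext i; congr 1; ext j
  rw [← Real.rpow_natCast _ 2]
  norm_num [Complex.sq_norm]

lemma schatten2_eq {d : ℕ} (A : Matrix (Fin d) (Fin d) ℂ) : schatten2 A = ‖A‖ := by
  rw [schatten2]
  have : (A * Aᴴ).trace.re = ‖A‖ ^ 2 := by
    rw [norm_sq_eq, Matrix.trace, Complex.re_sum]
    congr 1; ext i
    rw [Matrix.diag, Matrix.mul_apply, Complex.re_sum]
    congr 1; ext j
    simp [Matrix.conjTranspose_apply, Complex.mul_conj]
  rw [this, Real.sqrt_sq (norm_nonneg _)]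

lemma schatten2_nonneg {d : ℕ} (A : Matrix (Fin d) (Fin d) ℂ) : 0 ≤ schatten2 A :=
  Real.sqrt_nonneg _

lemma schatten2_unit_left {d : ℕ} {V : Matrix (Fin d) (Fin d) ℂ} (hV : Vᴴ * V = 1)
    (A : Matrix (Fin d) (Fin d) ℂ) : schatten2 (V * A) = schatten2 A := by
  unfold schatten2
  congr 2
  rw [conjTranspose_mul]
  have h1 : V * A * (Aᴴ * Vᴴ) = V * (A * Aᴴ * Vᴴ) := by noncomm_ring
  rw [h1, Matrix.trace_mul_comm, mul_assoc, hV, mul_one]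

lemma schatten2_unit_right {d : ℕ} {V : Matrix (Fin d) (Fin d) ℂ} (hV : V * Vᴴ = 1)
    (A : Matrix (Fin d) (Fin d) ℂ) : schatten2 (A * V) = schatten2 A := by
  unfold schatten2
  congr 2
  rw [conjTranspose_mul, mul_assoc, ← mul_assoc V, hV, one_mul]

lemma schatten2_neg {d : ℕ} (A : Matrix (Fin d) (Fin d) ℂ) : schatten2 (-A) = schatten2 A := by
  rw [schatten2_eq, schatten2_eq, norm_neg]

lemma diag_comm_bound {d : ℕ} (f : Fin d → ℝ) (C : Matrix (Fin d) (Fin d) ℂ) :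
    ‖diagonal (fun i => (f i : ℂ)) * C - C * diagonal (fun i => (f i : ℂ))‖
      ≤ Real.sqrt 2 * ‖diagonal (fun i => (f i : ℂ))‖ * ‖C‖ := by
  set D := diagonal (fun i => (f i : ℂ)) with hD
  have hD2 : ‖D‖ ^ 2 = ∑ i, f i ^ 2 := by
    rw [norm_sq_eq]
    congr 1; ext i
    rw [Finset.sum_eq_single i]
    · simp [hD, Matrix.diagonal_apply_eq, Complex.normSq_ofReal, sq]
    · intro b _ hb
      simp [hD, Matrix.diagonal_apply_ne' _ hb]
    · simp
  have hsq : ‖D * C - C * D‖ ^ 2 ≤ 2 * ‖D‖ ^ 2 * ‖C‖ ^ 2 := by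
    rw [norm_sq_eq, norm_sq_eq (A := C), hD2]
    have hentry : ∀ i j, Complex.normSq ((D * C - C * D) i j)
        = (f i - f j) ^ 2 * Complex.normSq (C i j) := by
      intro i j
      have : (D * C - C * D) i j = ((f i : ℂ) - f j) * C i j := by
        simp [hD, Matrix.sub_apply, Matrix.diagonal_mul, Matrix.mul_diagonal]
        ring
      rw [this, Complex.normSq_mul, ← Complex.ofReal_sub, Complex.normSq_ofReal, sq]
    calc ∑ i, ∑ j, Complex.normSq ((D * C - C * D) i j)
        = ∑ i, ∑ j, (f i - f j) ^ 2 * Complex.normSq (C i j) := by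
          simp_rw [hentry]
      _ ≤ ∑ i, ∑ j, (2 * ∑ k, f k ^ 2) * Complex.normSq (C i j) := by
          apply Finset.sum_le_sum; intro i _
          apply Finset.sum_le_sum; intro j _
          apply mul_le_mul_of_nonneg_right _ (Complex.normSq_nonneg _)
          by_cases hij : i = j
          · subst hij; simp [sub_self]
            positivity
          · have hsum : f i ^ 2 + f j ^ 2 ≤ ∑ k, f k ^ 2 := by
              have := Finset.sum_le_sum_of_subset_of_nonneg
                (Finset.subset_univ ({i, j} : Finset (Fin d)))
                (fun k _ _ => sq_nonneg (f k))
              simpa [Finset.sum_pair hij] using this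
            nlinarith [sq_nonneg (f i + f j)]
      _ = 2 * (∑ k, f k ^ 2) * ∑ i, ∑ j, Complex.normSq (C i j) := by
          simp_rw [Finset.mul_sum]
  have hrhs : 2 * ‖D‖ ^ 2 * ‖C‖ ^ 2 = (Real.sqrt 2 * ‖D‖ * ‖C‖) ^ 2 := by
    rw [mul_pow, mul_pow, Real.sq_sqrt (by norm_num : (2:ℝ) ≥ 0)]
  calc ‖D * C - C * D‖ = Real.sqrt (‖D * C - C * D‖ ^ 2) := (Real.sqrt_sq (norm_nonneg _)).symm
    _ ≤ Real.sqrt ((Real.sqrt 2 * ‖D‖ * ‖C‖) ^ 2) := Real.sqrt_le_sqrt (by rw [← hrhs]; exact hsq)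
    _ = Real.sqrt 2 * ‖D‖ * ‖C‖ := Real.sqrt_sq (by positivity)

lemma comm_bound {d : ℕ} {O : Matrix (Fin d) (Fin d) ℂ} (hO : O.IsHermitian)
    (B : Matrix (Fin d) (Fin d) ℂ) :
    schatten2 (O * B - B * O) ≤ Real.sqrt 2 * schatten2 O * schatten2 B := by
  set W : Matrix (Fin d) (Fin d) ℂ := (hO.eigenvectorUnitary : Matrix (Fin d) (Fin d) ℂ) with hWdef
  set D : Matrix (Fin d) (Fin d) ℂ := diagonal (fun i => ((hO.eigenvalues i : ℝ) : ℂ)) with hDdef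
  have hW1 : Wᴴ * W = 1 := by
    rw [← Matrix.star_eq_conjTranspose]
    exact (Unitary.mem_iff.mp (hO.eigenvectorUnitary).2).1
  have hW2 : W * Wᴴ = 1 := by
    rw [← Matrix.star_eq_conjTranspose]
    exact (Unitary.mem_iff.mp (hO.eigenvectorUnitary).2).2
  have hOeq : O = W * D * Wᴴ := by
    have := hO.spectral_theorem
    rw [← Matrix.star_eq_conjTranspose]
    convert this using 2
    rw [Unitary.conjStarAlgAut_apply]; rfl
  set C : Matrix (Fin d) (Fin d) ℂ := Wᴴ * B * W with hCdef
  have key : W * (D * C - C * D) * Wᴴ = O * B - B * O := by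
    have : W * (D * (Wᴴ * B * W) - (Wᴴ * B * W) * D) * Wᴴ
        = (W * D * Wᴴ) * B * (W * Wᴴ) - (W * Wᴴ) * B * (W * D * Wᴴ) := by noncomm_ring
    rw [hCdef, this, hW2, ← hOeq, one_mul, mul_one]
  have hWH : Wᴴ * Wᴴᴴ = 1 := by rw [conjTranspose_conjTranspose]; exact hW1
  have hWH2 : Wᴴᴴ * Wᴴ = 1 := by rw [conjTranspose_conjTranspose]; exact hW2
  have e1 : schatten2 (O * B - B * O) = schatten2 (D * C - C * D) := by
    rw [← key, schatten2_unit_right hWH, schatten2_unit_left hW1]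
  have e2 : schatten2 C = schatten2 B := by
    rw [hCdef, schatten2_unit_right hW2, schatten2_unit_left hWH2]
  have e3 : schatten2 O = schatten2 D := by
    rw [hOeq, schatten2_unit_right hWH, schatten2_unit_left hW1]
  rw [e1, ← e2, e3, schatten2_eq, schatten2_eq, schatten2_eq]
  exact diag_comm_bound _ C

def IsUni {d : ℕ} (W : Matrix (Fin d) (Fin d) ℂ) : Prop := W * Wᴴ = 1 ∧ Wᴴ * W = 1

lemma IsUni.one {d : ℕ} : IsUni (1 : Matrix (Fin d) (Fin d) ℂ) := by
  constructor <;> simp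

lemma IsUni.mul {d : ℕ} {A B : Matrix (Fin d) (Fin d) ℂ} (hA : IsUni A) (hB : IsUni B) :
    IsUni (A * B) := by
  constructor
  · rw [conjTranspose_mul]
    have : A * B * (Bᴴ * Aᴴ) = A * (B * Bᴴ) * Aᴴ := by noncomm_ring
    rw [this, hB.1, mul_one, hA.1]
  · rw [conjTranspose_mul]
    have : Bᴴ * Aᴴ * (A * B) = Bᴴ * (Aᴴ * A) * B := by noncomm_ring
    rw [this, hA.2, mul_one, hB.2]

lemma IsUni.pow {d : ℕ} {A : Matrix (Fin d) (Fin d) ℂ} (hA : IsUni A) (n : ℕ) :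
    IsUni (A ^ n) := by
  induction n with
  | zero => simpa using IsUni.one
  | succ n ih => rw [pow_succ]; exact ih.mul hA

lemma IsUni.ct {d : ℕ} {A : Matrix (Fin d) (Fin d) ℂ} (hA : IsUni A) : IsUni (Aᴴ) :=
  ⟨by rw [conjTranspose_conjTranspose]; exact hA.2,
   by rw [conjTranspose_conjTranspose]; exact hA.1⟩

lemma telescope_bound {d : ℕ} {U₀ U O M : Matrix (Fin d) (Fin d) ℂ}
    (hU₀ : IsUni U₀) (hU : IsUni U) (hO : O.IsHermitian) (r : ℕ)
    (hM : M = U₀ᴴ * U - 1) :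
    schatten2 (U₀ ^ r * O * (U₀ᴴ) ^ r - U ^ r * O * (Uᴴ) ^ r)
      ≤ Real.sqrt 2 * r * schatten2 O * schatten2 M := by
  set V : ℕ → Matrix (Fin d) (Fin d) ℂ := fun k => U₀ ^ k * U ^ (r - k) with hVdef
  set f : ℕ → Matrix (Fin d) (Fin d) ℂ := fun k => V k * O * (V k)ᴴ with hfdef
  have hVuni : ∀ k, IsUni (V k) := fun k => (hU₀.pow k).mul (hU.pow (r - k))
  have hX : U₀ ^ r * O * (U₀ᴴ) ^ r - U ^ r * O * (Uᴴ) ^ r = f r - f 0 := by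
    simp only [hfdef, hVdef, Nat.sub_self, Nat.sub_zero, pow_zero, mul_one, one_mul,
      conjTranspose_mul, conjTranspose_pow, conjTranspose_one]
  have hstep : ∀ k, k < r → schatten2 (f (k + 1) - f k)
      ≤ Real.sqrt 2 * schatten2 O * schatten2 M := by
    intro k hk
    set N : Matrix (Fin d) (Fin d) ℂ := (Uᴴ) ^ (r - k) * U₀ * U ^ (r - k - 1) with hNdef
    have hNuni : IsUni N := ((hU.ct.pow _).mul hU₀).mul (hU.pow _)
    have hVN : V k * N = V (k + 1) := by
      have h1 : U ^ (r - k) * (Uᴴ) ^ (r - k) = 1 := by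
        rw [← conjTranspose_pow]; exact (hU.pow (r - k)).1
      have h2 : V k * N = U₀ ^ k * ((U ^ (r - k) * (Uᴴ) ^ (r - k)) * (U₀ * U ^ (r - k - 1))) := by
        simp only [hVdef, hNdef]; noncomm_ring
      rw [h2, h1, one_mul, hVdef]
      show U₀ ^ k * (U₀ * U ^ (r - k - 1)) = U₀ ^ (k + 1) * U ^ (r - (k + 1))
      rw [← mul_assoc, ← pow_succ, Nat.sub_sub]
    have hB : N - 1 = -((Uᴴ) ^ (r - k) * U₀ * M * U ^ (r - k - 1)) := by
      have hsucc : U * U ^ (r - k - 1) = U ^ (r - k) := by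
        rw [← pow_succ']
        congr 1
        omega
      have h3 : U₀ * M = U - U₀ := by
        rw [hM, mul_sub, mul_one, ← mul_assoc, hU₀.1, one_mul]
      have h4 : (Uᴴ) ^ (r - k) * U₀ * M * U ^ (r - k - 1)
          = (Uᴴ) ^ (r - k) * ((U₀ * M) * U ^ (r - k - 1)) := by noncomm_ring
      rw [h4, h3, sub_mul, mul_sub, hsucc]
      have h5 : (Uᴴ) ^ (r - k) * U ^ (r - k) = 1 := by
        rw [← conjTranspose_pow]; exact (hU.pow (r - k)).2
      rw [h5, hNdef]
      have : (Uᴴ) ^ (r - k) * (U₀ * U ^ (r - k - 1)) = (Uᴴ) ^ (r - k) * U₀ * U ^ (r - k - 1) := by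
        noncomm_ring
      rw [this]
      abel
    have hfk : f (k + 1) - f k = V k * (N * O * Nᴴ - O) * (V k)ᴴ := by
      rw [hfdef]
      show V (k+1) * O * (V (k+1))ᴴ - V k * O * (V k)ᴴ = _
      rw [← hVN, conjTranspose_mul]
      noncomm_ring
    have hVk1 : (V k)ᴴ * ((V k)ᴴ)ᴴ = 1 := by
      rw [conjTranspose_conjTranspose]; exact (hVuni k).2
    have hstep2 : schatten2 (f (k + 1) - f k) = schatten2 (N * O * Nᴴ - O) := by
      rw [hfk, schatten2_unit_right hVk1, schatten2_unit_left (hVuni k).2]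
    have hcomm : N * O * Nᴴ - O = (N * O - O * N) * Nᴴ := by
      rw [sub_mul]
      have : O * N * Nᴴ = O * (N * Nᴴ) := by noncomm_ring
      rw [this, hNuni.1, mul_one]
    have hNH : Nᴴ * (Nᴴ)ᴴ = 1 := by rw [conjTranspose_conjTranspose]; exact hNuni.2
    have hneg : N * O - O * N = -(O * (N - 1) - (N - 1) * O) := by noncomm_ring
    have hBM : schatten2 (N - 1) = schatten2 M := by
      rw [hB, schatten2_neg]
      have hu1 : IsUni ((Uᴴ) ^ (r - k) * U₀) := (hU.ct.pow _).mul hU₀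
      rw [schatten2_unit_right (hU.pow (r - k - 1)).1, schatten2_unit_left hu1.2]
    calc schatten2 (f (k + 1) - f k) = schatten2 (N * O - O * N) := by
          rw [hstep2, hcomm, schatten2_unit_right hNH]
      _ = schatten2 (O * (N - 1) - (N - 1) * O) := by rw [hneg, schatten2_neg]
      _ ≤ Real.sqrt 2 * schatten2 O * schatten2 (N - 1) := comm_bound hO _
      _ = Real.sqrt 2 * schatten2 O * schatten2 M := by rw [hBM]
  rw [hX, ← Finset.sum_range_sub f r]
  have htri : schatten2 (∑ k ∈ Finset.range r, (f (k + 1) - f k))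
      ≤ ∑ k ∈ Finset.range r, schatten2 (f (k + 1) - f k) := by
    simp only [schatten2_eq]
    exact norm_sum_le _ _
  refine htri.trans ?_
  have : ∑ k ∈ Finset.range r, schatten2 (f (k + 1) - f k)
      ≤ ∑ k ∈ Finset.range r, Real.sqrt 2 * schatten2 O * schatten2 M :=
    Finset.sum_le_sum fun k hk => hstep k (Finset.mem_range.mp hk)
  refine this.trans ?_
  rw [Finset.sum_const, Finset.card_range, nsmul_eq_mul]
  exact le_of_eq (by ring)

end MatrixSide

section MeasureSide

lemma integral_sum4 {α : Type*} [MeasurableSpace α] (μ : Measure α)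
    {ι : Type*} [Fintype ι] (F : ι → ι → ι → ι → α → ℂ)
    (h : ∀ i j k l, Integrable (F i j k l) μ) :
    ∫ x, ∑ i, ∑ j, ∑ k, ∑ l, F i j k l x ∂μ
      = ∑ i, ∑ j, ∑ k, ∑ l, ∫ x, F i j k l x ∂μ := by
  rw [integral_finset_sum _ (fun i _ => integrable_finset_sum _ (fun j _ =>
    integrable_finset_sum _ (fun k _ => integrable_finset_sum _ (fun l _ => h i j k l))))]
  refine Finset.sum_congr rfl fun i _ => ?_
  rw [integral_finset_sum _ (fun j _ =>
    integrable_finset_sum _ (fun k _ => integrable_finset_sum _ (fun l _ => h i j k l)))]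
  refine Finset.sum_congr rfl fun j _ => ?_
  rw [integral_finset_sum _ (fun k _ => integrable_finset_sum _ (fun l _ => h i j k l))]
  refine Finset.sum_congr rfl fun k _ => ?_
  rw [integral_finset_sum _ (fun l _ => h i j k l)]

lemma qform_sq_expand {d : ℕ} (X : Matrix (Fin d) (Fin d) ℂ) (ψ : EuclideanSpace ℂ (Fin d)) :
    ((‖qform X ψ‖)^2 : ℂ) = ∑ i, ∑ k, ∑ j, ∑ l,
      X i j * (starRingEnd ℂ) (X k l)
        * (ψ j * (starRingEnd ℂ) (ψ i) * ψ k * (starRingEnd ℂ) (ψ l)) := by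
  have h0 : ((‖qform X ψ‖)^2 : ℂ) = qform X ψ * (starRingEnd ℂ) (qform X ψ) := by
    rw [Complex.mul_conj]; norm_cast; exact Complex.sq_norm _
  rw [h0, qform, map_sum, Finset.sum_mul_sum]
  refine Finset.sum_congr rfl fun i _ => Finset.sum_congr rfl fun k _ => ?_
  rw [map_sum, Finset.sum_mul_sum]
  refine Finset.sum_congr rfl fun j _ => Finset.sum_congr rfl fun l _ => ?_
  simp only [_root_.map_mul, Complex.conj_conj]
  ring

lemma design_sum {d : ℕ} (X : Matrix (Fin d) (Fin d) ℂ) :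
    (∑ i, ∑ k, ∑ j, ∑ l, (X i j * (starRingEnd ℂ) (X k l)) *
      ((((if (j:Fin d) = i then (1:ℂ) else 0) * (if k = l then 1 else 0)
        + (if j = l then 1 else 0) * (if k = i then 1 else 0))) / ((d:ℂ) * (d+1))))
    = ((Complex.normSq X.trace : ℂ) + ((∑ i, ∑ j, Complex.normSq (X i j) : ℝ) : ℂ))
        / ((d:ℂ) * (d+1)) := by
  simp_rw [← mul_div_assoc, ← Finset.sum_div]
  congr 1
  simp_rw [mul_add, Finset.sum_add_distrib]
  congr 1
  · have h1 : ∀ i k : Fin d, (∑ j, ∑ l : Fin d, X i j * (starRingEnd ℂ) (X k l) *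
        ((if j = i then (1:ℂ) else 0) * (if k = l then 1 else 0)))
        = X i i * (starRingEnd ℂ) (X k k) := by
      intro i k
      simp only [mul_ite, ite_mul, mul_one, mul_zero, zero_mul, one_mul,
        Finset.sum_ite_eq, Finset.sum_ite_eq', Finset.mem_univ, if_true]
    calc (∑ i, ∑ k, ∑ j, ∑ l, X i j * (starRingEnd ℂ) (X k l) *
          ((if j = i then (1:ℂ) else 0) * (if k = l then 1 else 0)))
        = ∑ i, ∑ k, X i i * (starRingEnd ℂ) (X k k) :=
          Finset.sum_congr rfl fun i _ => Finset.sum_congr rfl fun k _ => h1 i k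
      _ = X.trace * (starRingEnd ℂ) X.trace := by
          rw [Matrix.trace, map_sum, Finset.sum_mul_sum]
          rfl
      _ = (Complex.normSq X.trace : ℂ) := Complex.mul_conj _
  · have h2 : ∀ i k : Fin d, (∑ j, ∑ l : Fin d, X i j * (starRingEnd ℂ) (X k l) *
        ((if j = l then (1:ℂ) else 0) * (if k = i then 1 else 0)))
        = if k = i then ∑ j, X i j * (starRingEnd ℂ) (X k j) else 0 := by
      intro i k
      by_cases hki : k = i
      · simp only [hki, if_true]
        refine Finset.sum_congr rfl fun j _ => ?_
        simp only [mul_ite, ite_mul, mul_one, mul_zero, zero_mul, one_mul,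
          Finset.sum_ite_eq, Finset.sum_ite_eq', Finset.mem_univ, if_true]
      · simp [hki]
    calc (∑ i, ∑ k, ∑ j, ∑ l, X i j * (starRingEnd ℂ) (X k l) *
          ((if j = l then (1:ℂ) else 0) * (if k = i then 1 else 0)))
        = ∑ i, ∑ k, if k = i then ∑ j, X i j * (starRingEnd ℂ) (X k j) else 0 :=
          Finset.sum_congr rfl fun i _ => Finset.sum_congr rfl fun k _ => h2 i k
      _ = ∑ i, ∑ j, X i j * (starRingEnd ℂ) (X i j) := by
          refine Finset.sum_congr rfl fun i _ => ?_
          simp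
      _ = ((∑ i, ∑ j, Complex.normSq (X i j) : ℝ) : ℂ) := by
          push_cast
          exact Finset.sum_congr rfl fun i _ => Finset.sum_congr rfl fun j _ =>
            Complex.mul_conj _

variable {d : ℕ} [MeasurableSpace (EuclideanSpace ℂ (Fin d))]
  [BorelSpace (EuclideanSpace ℂ (Fin d))]
  (μ : Measure (EuclideanSpace ℂ (Fin d))) [IsProbabilityMeasure μ]

lemma coord_cont (i : Fin d) : Continuous fun ψ : EuclideanSpace ℂ (Fin d) => ψ i :=
  (EuclideanSpace.proj i (𝕜 := ℂ)).continuous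

lemma coord_bound {ψ : EuclideanSpace ℂ (Fin d)} (h : ‖ψ‖ = 1) (i : Fin d) :
    ‖ψ i‖ ≤ 1 := by
  have h1 : ‖ψ i‖ ^ 2 ≤ ∑ j, ‖ψ j‖ ^ 2 :=
    Finset.single_le_sum (f := fun j => ‖ψ j‖ ^ 2) (fun j _ => sq_nonneg _) (Finset.mem_univ i)
  have h2 : ∑ j, ‖ψ j‖ ^ 2 = 1 := by
    have := EuclideanSpace.norm_eq ψ
    rw [h] at this
    have h3 : (0:ℝ) ≤ ∑ j, ‖ψ j‖ ^ 2 := Finset.sum_nonneg fun j _ => sq_nonneg _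
    nlinarith [Real.sq_sqrt h3]
  rw [h2] at h1
  have : ‖ψ i‖ ≤ 1 := by nlinarith [norm_nonneg (ψ i)]
  simpa using this

lemma mono_integrable (hunit : ∀ᵐ ψ ∂μ, ‖ψ‖ = 1) (i j k l : Fin d) :
    Integrable (fun ψ : EuclideanSpace ℂ (Fin d) =>
      ψ i * (starRingEnd ℂ) (ψ j) * ψ k * (starRingEnd ℂ) (ψ l)) μ := by
  have hc : Continuous fun ψ : EuclideanSpace ℂ (Fin d) =>
      ψ i * (starRingEnd ℂ) (ψ j) * ψ k * (starRingEnd ℂ) (ψ l) :=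
    (((coord_cont i).mul (Complex.continuous_conj.comp (coord_cont j))).mul
      (coord_cont k)).mul (Complex.continuous_conj.comp (coord_cont l))
  refine Integrable.mono' (integrable_const (1:ℝ)) hc.aestronglyMeasurable ?_
  filter_upwards [hunit] with ψ hψ
  have h1 := coord_bound hψ i
  have h2 := coord_bound hψ j
  have h3 := coord_bound hψ k
  have h4 := coord_bound hψ l
  simp only [norm_mul, Complex.norm_conj]
  have e1 : ‖ψ i‖ * ‖ψ j‖ ≤ 1 :=
    mul_le_one₀ h1 (norm_nonneg _) h2
  have e2 : ‖ψ i‖ * ‖ψ j‖ * ‖ψ k‖ ≤ 1 :=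
    mul_le_one₀ e1 (norm_nonneg _) h3
  exact mul_le_one₀ e2 (norm_nonneg _) h4

lemma qform_cont (X : Matrix (Fin d) (Fin d) ℂ) : Continuous (qform X) := by
  unfold qform
  exact continuous_finset_sum _ fun i _ => continuous_finset_sum _ fun j _ =>
    ((Complex.continuous_conj.comp (coord_cont i)).mul continuous_const).mul (coord_cont j)

lemma qform_bound (X : Matrix (Fin d) (Fin d) ℂ) {ψ : EuclideanSpace ℂ (Fin d)}
    (h : ‖ψ‖ = 1) : ‖qform X ψ‖ ≤ ∑ i, ∑ j, ‖X i j‖ := by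
  refine (norm_sum_le _ _).trans ?_
  refine Finset.sum_le_sum fun i _ => ?_
  refine (norm_sum_le _ _).trans ?_
  refine Finset.sum_le_sum fun j _ => ?_
  rw [norm_mul, norm_mul]
  simp only [Complex.norm_conj]
  calc ‖ψ i‖ * ‖X i j‖ * ‖ψ j‖
      ≤ 1 * ‖X i j‖ * 1 := by
        gcongr <;> first
          | exact norm_nonneg _
          | exact coord_bound h i
          | exact coord_bound h j
    _ = ‖X i j‖ := by ring

lemma qform_abs_integrable (hunit : ∀ᵐ ψ ∂μ, ‖ψ‖ = 1) (X : Matrix (Fin d) (Fin d) ℂ) :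
    Integrable (fun ψ => ‖qform X ψ‖) μ := by
  refine Integrable.mono' (integrable_const (∑ i, ∑ j, ‖X i j‖))
    (continuous_norm.comp (qform_cont X)).aestronglyMeasurable ?_
  filter_upwards [hunit] with ψ hψ
  rw [Real.norm_eq_abs, abs_of_nonneg (norm_nonneg _)]
  exact qform_bound X hψ

lemma qform_sq_integrable (hunit : ∀ᵐ ψ ∂μ, ‖ψ‖ = 1) (X : Matrix (Fin d) (Fin d) ℂ) :
    Integrable (fun ψ => ‖qform X ψ‖ ^ 2) μ := by
  refine Integrable.mono' (integrable_const ((∑ i, ∑ j, ‖X i j‖) ^ 2))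
    ((continuous_norm.comp (qform_cont X)).pow 2).aestronglyMeasurable ?_
  filter_upwards [hunit] with ψ hψ
  rw [Real.norm_eq_abs, abs_of_nonneg (by positivity)]
  exact pow_le_pow_left₀ (norm_nonneg _) (qform_bound X hψ) 2

end MeasureSide

section Main

variable {d : ℕ} [MeasurableSpace (EuclideanSpace ℂ (Fin d))]
  [BorelSpace (EuclideanSpace ℂ (Fin d))]
  (μ : Measure (EuclideanSpace ℂ (Fin d))) [IsProbabilityMeasure μ]

lemma integral_qform_sq (hunit : ∀ᵐ ψ ∂μ, ‖ψ‖ = 1)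
    (hdesign : ∀ i j k l, (∫ ψ,
        ψ i * (starRingEnd ℂ) (ψ j) * ψ k * (starRingEnd ℂ) (ψ l) ∂μ)
      = ((if i = j then 1 else 0) * (if k = l then 1 else 0)
        + (if i = l then 1 else 0) * (if k = j then 1 else 0)) / (d * (d + 1)))
    (X : Matrix (Fin d) (Fin d) ℂ) :
    ∫ ψ, ‖qform X ψ‖ ^ 2 ∂μ
      = (Complex.normSq X.trace + ∑ i, ∑ j, Complex.normSq (X i j)) / (d * (d + 1)) := by
  have key : (∫ ψ, ((‖qform X ψ‖ ^ 2 : ℝ) : ℂ) ∂μ)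
      = ((Complex.normSq X.trace : ℂ) + ((∑ i, ∑ j, Complex.normSq (X i j) : ℝ) : ℂ))
        / ((d:ℂ) * (d+1)) := by
    calc ∫ ψ, ((‖qform X ψ‖ ^ 2 : ℝ) : ℂ) ∂μ
        = ∫ ψ, ∑ i, ∑ k, ∑ j, ∑ l, X i j * (starRingEnd ℂ) (X k l)
            * (ψ j * (starRingEnd ℂ) (ψ i) * ψ k * (starRingEnd ℂ) (ψ l)) ∂μ := by
          refine integral_congr_ae (Filter.Eventually.of_forall fun ψ => ?_)
          dsimp only
          rw [← qform_sq_expand]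
          push_cast
          ring
      _ = ∑ i, ∑ k, ∑ j, ∑ l, ∫ ψ, X i j * (starRingEnd ℂ) (X k l)
            * (ψ j * (starRingEnd ℂ) (ψ i) * ψ k * (starRingEnd ℂ) (ψ l)) ∂μ :=
          integral_sum4 μ _ (fun i k j l =>
            (mono_integrable μ hunit j i k l).const_mul _)
      _ = ∑ i, ∑ k, ∑ j, ∑ l, (X i j * (starRingEnd ℂ) (X k l)) *
            ((((if (j:Fin d) = i then (1:ℂ) else 0) * (if k = l then 1 else 0)
              + (if j = l then 1 else 0) * (if k = i then 1 else 0))) / ((d:ℂ) * (d+1))) := by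
          refine Finset.sum_congr rfl fun i _ => Finset.sum_congr rfl fun k _ =>
            Finset.sum_congr rfl fun j _ => Finset.sum_congr rfl fun l _ => ?_
          rw [integral_const_mul, hdesign j i k l]
      _ = _ := design_sum X
  have hco : ∫ ψ, ((‖qform X ψ‖ ^ 2 : ℝ) : ℂ) ∂μ
      = ((∫ ψ, ‖qform X ψ‖ ^ 2 ∂μ : ℝ) : ℂ) := integral_ofReal
  rw [hco] at key
  have : ((∫ ψ, ‖qform X ψ‖ ^ 2 ∂μ : ℝ) : ℂ)
      = (((Complex.normSq X.trace + ∑ i, ∑ j, Complex.normSq (X i j)) / (d * (d + 1)) : ℝ) : ℂ) := by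
    rw [key]
    push_cast
    ring
  exact_mod_cast this

lemma int_le_sqrt {f : EuclideanSpace ℂ (Fin d) → ℝ} (hnn : ∀ x, 0 ≤ f x)
    (hf : Integrable f μ) (hf2 : Integrable (fun x => f x ^ 2) μ) :
    ∫ x, f x ∂μ ≤ Real.sqrt (∫ x, f x ^ 2 ∂μ) := by
  set a := ∫ x, f x ∂μ with ha
  have ha0 : 0 ≤ a := integral_nonneg hnn
  have hkey : a ^ 2 ≤ ∫ x, f x ^ 2 ∂μ := by
    have hnonneg : 0 ≤ ∫ x, (f x - a) ^ 2 ∂μ := integral_nonneg fun x => sq_nonneg _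
    have hexp : ∫ x, (f x - a) ^ 2 ∂μ = (∫ x, f x ^ 2 ∂μ) - a ^ 2 := by
      have hpt : ∀ x, (f x - a) ^ 2 = (f x ^ 2 - 2 * a * f x) + a ^ 2 := fun x => by ring
      have hint1 : Integrable (fun x => f x ^ 2 - 2 * a * f x) μ := by
        exact hf2.sub (hf.const_mul (2 * a))
      simp_rw [hpt]
      rw [integral_add hint1 (integrable_const _),
        integral_sub hf2 (hf.const_mul (2 * a)), integral_const, integral_const_mul]
      simp [measure_univ, ← ha]
      ring
    linarith [hexp ▸ hnonneg]
  calc a = Real.sqrt (a ^ 2) := (Real.sqrt_sq ha0).symm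
    _ ≤ _ := Real.sqrt_le_sqrt hkey

end Main

/-- For unitaries `U₀, U`, Hermitian `O`, `r ≥ 1`, a 2-design measure `μ₂` on unit
vectors (stated entrywise), and `M = U₀ᴴ U - 1`:
`∫ |⟨ψ|U₀^r O (U₀ᴴ)^r|ψ⟩ - ⟨ψ|U^r O (Uᴴ)^r|ψ⟩| dμ₂ ≤ √2 r ‖O‖₂ ‖M‖₂ / √(d(d+1))`. -/
theorem stmt_13 {d : ℕ} [MeasurableSpace (EuclideanSpace ℂ (Fin d))]
    [BorelSpace (EuclideanSpace ℂ (Fin d))]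
    (μ : Measure (EuclideanSpace ℂ (Fin d)))
    [IsProbabilityMeasure μ] (hunit : ∀ᵐ ψ ∂μ, ‖ψ‖ = 1)
    (hdesign : ∀ i j k l, (∫ ψ,
        ψ i * (starRingEnd ℂ) (ψ j) * ψ k * (starRingEnd ℂ) (ψ l) ∂μ)
      = ((if i = j then 1 else 0) * (if k = l then 1 else 0)
        + (if i = l then 1 else 0) * (if k = j then 1 else 0)) / (d * (d + 1)))
    (U₀ U O : Matrix (Fin d) (Fin d) ℂ)
    (hU₀ : U₀ * U₀ᴴ = 1 ∧ U₀ᴴ * U₀ = 1) (hU : U * Uᴴ = 1 ∧ Uᴴ * U = 1)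
    (hO : O.IsHermitian) (r : ℕ) (hr : 1 ≤ r)
    (M : Matrix (Fin d) (Fin d) ℂ) (hM : M = U₀ᴴ * U - 1) :
    (∫ ψ, ‖qform (U₀ ^ r * O * (U₀ᴴ) ^ r) ψ
        - qform (U ^ r * O * (Uᴴ) ^ r) ψ‖ ∂μ)
      ≤ Real.sqrt 2 * r * schatten2 O * schatten2 M / Real.sqrt (d * (d + 1)) := by
  have hU₀' : IsUni U₀ := ⟨hU₀.1, hU₀.2⟩
  have hU' : IsUni U := ⟨hU.1, hU.2⟩
  set A := U₀ ^ r * O * (U₀ᴴ) ^ r with hA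
  set B := U ^ r * O * (Uᴴ) ^ r with hB
  set X := A - B with hXdef
  have hqsub : ∀ ψ, qform A ψ - qform B ψ = qform X ψ := by
    intro ψ
    simp only [qform, hXdef, Matrix.sub_apply, mul_sub, sub_mul, Finset.sum_sub_distrib]
  have hLHS : (∫ ψ, ‖qform A ψ - qform B ψ‖ ∂μ)
      = ∫ ψ, ‖qform X ψ‖ ∂μ := by
    refine integral_congr_ae (Filter.Eventually.of_forall fun ψ => ?_)
    dsimp only
    rw [hqsub ψ]
  have htrW : ∀ (W : Matrix (Fin d) (Fin d) ℂ), IsUni W →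
      (W ^ r * O * (Wᴴ) ^ r).trace = O.trace := by
    intro W hW
    rw [← conjTranspose_pow, Matrix.trace_mul_comm, ← mul_assoc, (hW.pow r).2, one_mul]
  have htr : X.trace = 0 := by
    rw [hXdef, Matrix.trace_sub, hA, hB, htrW U₀ hU₀', htrW U hU', sub_self]
  have hval := integral_qform_sq μ hunit hdesign X
  rw [htr] at hval
  simp only [Complex.normSq_zero, zero_add] at hval
  have hCS := int_le_sqrt μ (f := fun ψ => ‖qform X ψ‖)
    (fun ψ => norm_nonneg _) (qform_abs_integrable μ hunit X)
    (qform_sq_integrable μ hunit X)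
  have hsX : Real.sqrt (∑ i, ∑ j, Complex.normSq (X i j)) = schatten2 X := by
    rw [schatten2_eq, ← norm_sq_eq, Real.sqrt_sq (norm_nonneg _)]
  have htel : schatten2 X ≤ Real.sqrt 2 * r * schatten2 O * schatten2 M :=
    telescope_bound hU₀' hU' hO r hM
  rcases Nat.eq_zero_or_pos d with hd | hd
  · subst hd
    have hz : (∫ ψ, ‖qform A ψ - qform B ψ‖ ∂μ) = 0 := by
      have : ∀ ψ : EuclideanSpace ℂ (Fin 0), ‖qform A ψ - qform B ψ‖ = 0 := by
        intro ψ
        simp [qform]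
      simp only [this, integral_zero]
    rw [hz]
    apply div_nonneg _ (Real.sqrt_nonneg _)
    have := schatten2_nonneg O
    have := schatten2_nonneg M
    have := Real.sqrt_nonneg 2
    positivity
  · have hdpos : (0:ℝ) < (d:ℝ) * ((d:ℝ) + 1) := by
      have : (0:ℝ) < (d:ℝ) := by exact_mod_cast hd
      positivity
    have hc : (0:ℝ) < Real.sqrt ((d:ℝ) * ((d:ℝ) + 1)) := Real.sqrt_pos.mpr hdpos
    calc (∫ ψ, ‖qform A ψ - qform B ψ‖ ∂μ)
        = ∫ ψ, ‖qform X ψ‖ ∂μ := hLHS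
      _ ≤ Real.sqrt (∫ ψ, ‖qform X ψ‖ ^ 2 ∂μ) := hCS
      _ = Real.sqrt ((∑ i, ∑ j, Complex.normSq (X i j)) / ((d:ℝ) * ((d:ℝ) + 1))) := by
          rw [hval]
      _ = Real.sqrt (∑ i, ∑ j, Complex.normSq (X i j)) / Real.sqrt ((d:ℝ) * ((d:ℝ) + 1)) := by
          rw [Real.sqrt_div (Finset.sum_nonneg fun i _ =>
            Finset.sum_nonneg fun j _ => Complex.normSq_nonneg (X i j))]
      _ = schatten2 X / Real.sqrt ((d:ℝ) * ((d:ℝ) + 1)) := by rw [hsX]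
      _ ≤ Real.sqrt 2 * r * schatten2 O * schatten2 M / Real.sqrt ((d:ℝ) * ((d:ℝ) + 1)) :=
          (div_le_div_iff_of_pos_right hc).mpr htel
end

section
/- Let H = A + B with A, B Hermitian, and let S₂(t) = e^{itA/2} e^{itB} e^{itA/2} be the second-order Suzuki-Trotter step. Then ‖e^{itH} - S₂(t)‖ ≤ (t³/12) ‖[B,[B,A]]‖ + (t³/24) ‖[A,[A,B]]‖ for all t ≥ 0, where ‖·‖ is the operator norm. -/
set_option linter.unusedSectionVars false

open NormedSpace

noncomputable section TrotterAux

variable {𝔸 : Type*} [NormedRing 𝔸] [StarRing 𝔸] [CStarRing 𝔸]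
  [NormedAlgebra ℝ 𝔸] [CompleteSpace 𝔸] [StarModule ℝ 𝔸] [ContinuousStar 𝔸]

namespace Trotter

noncomputable local instance : NormedAlgebra ℚ 𝔸 := NormedAlgebra.restrictScalars ℚ ℝ 𝔸

lemma exp_neg_mul_exp (z : 𝔸) : exp (-z) * exp z = 1 := by
  rw [← exp_add_of_commute (Commute.refl z).neg_left, neg_add_cancel, exp_zero]

/-- `TE m s = exp (s • m)`. -/
def TE (m : 𝔸) (s : ℝ) : 𝔸 := exp (s • m)

lemma TE_cont (m : 𝔸) : Continuous (TE m) :=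
  exp_continuous.comp (continuous_id.smul continuous_const)

lemma TE_zero (m : 𝔸) : TE m 0 = 1 := by simp [TE, exp_zero]

lemma TE_mul_TE (m : 𝔸) (s : ℝ) : TE m s * TE (-m) s = 1 := by
  rw [TE, TE, smul_neg, ← exp_add_of_commute (Commute.refl _).neg_right, add_neg_cancel, exp_zero]

lemma TE_mul_TE' (m : 𝔸) (s : ℝ) : TE (-m) s * TE m s = 1 := by
  have := TE_mul_TE (-m) s; rwa [neg_neg] at this

lemma TE_comm (m : 𝔸) (s : ℝ) : TE m s * m = m * TE m s :=
  (((Commute.refl m).smul_left s).exp_left)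

lemma TE_deriv (m : 𝔸) (s : ℝ) : HasDerivAt (TE m) (m * TE m s) s :=
  hasDerivAt_exp_smul_const' m s

lemma TE_norm_le (m : 𝔸) (hm : star m = -m) (s : ℝ) : ‖TE m s‖ ≤ 1 := by
  have hu : star (TE m s) * TE m s = 1 := by
    rw [TE, star_exp, star_smul, star_trivial, hm, smul_neg, exp_neg_mul_exp]
  have h2 := CStarRing.norm_star_mul_self (x := TE m s)
  rw [hu] at h2
  have e1 : ‖(1:𝔸)‖ = ‖(1:𝔸)‖ * ‖(1:𝔸)‖ := by
    have := CStarRing.norm_star_mul_self (x := (1:𝔸))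
    simpa using this
  have key : ‖TE m s‖ * ‖TE m s‖ = (‖TE m s‖ * ‖TE m s‖) * (‖TE m s‖ * ‖TE m s‖) := by
    rw [← h2, ← e1]
  by_contra h1
  push_neg at h1
  have hu1 : 1 < ‖TE m s‖ * ‖TE m s‖ := by nlinarith
  have h3 := mul_lt_mul_of_pos_left hu1
    (show (0:ℝ) < ‖TE m s‖ * ‖TE m s‖ by positivity)
  rw [mul_one] at h3
  linarith


/-- Conjugation `TC m c s = exp(s•m) * c * exp(-s•m)`. -/
def TC (m c : 𝔸) (s : ℝ) : 𝔸 := TE m s * c * TE (-m) s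

lemma TC_cont (m c : 𝔸) : Continuous (TC m c) :=
  ((TE_cont m).mul continuous_const).mul (TE_cont (-m))

lemma TC_zero (m c : 𝔸) : TC m c 0 = c := by simp [TC, TE_zero]

lemma TC_deriv (m c : 𝔸) (s : ℝ) :
    HasDerivAt (TC m c) (TC m (m * c - c * m) s) s := by
  have h := ((TE_deriv m s).mul_const c).mul (TE_deriv (-m) s)
  convert h using 1
  · rfl
  have hc : TE m s * m = m * TE m s := TE_comm m s
  have hc' : ∀ z : 𝔸, TE m s * (m * z) = m * (TE m s * z) := fun z => by
    rw [← mul_assoc, hc, mul_assoc]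
  simp only [TC, mul_sub, sub_mul, mul_assoc, neg_mul, mul_neg, hc']
  abel

lemma TC_norm_le (m c : 𝔸) (hm : star m = -m) (s : ℝ) : ‖TC m c s‖ ≤ ‖c‖ := by
  have hm' : star (-m) = -(-m) := by rw [star_neg, hm]
  have h1 : ‖TE m s * c * TE (-m) s‖ ≤ ‖TE m s‖ * ‖c‖ * ‖TE (-m) s‖ :=
    (norm_mul_le _ _).trans (mul_le_mul_of_nonneg_right (norm_mul_le _ _) (norm_nonneg _))
  have h2 := TE_norm_le m hm s
  have h3 := TE_norm_le (-m) hm' s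
  have h4 : ‖TE m s‖ * ‖c‖ ≤ ‖c‖ := mul_le_of_le_one_left (norm_nonneg c) h2
  have h5 : ‖TE m s‖ * ‖c‖ * ‖TE (-m) s‖ ≤ ‖c‖ * 1 :=
    mul_le_mul h4 h3 (norm_nonneg _) (norm_nonneg c)
  rw [mul_one] at h5
  exact h1.trans h5

/-- Commutator `[q,p]`. -/
def Tc1 (p q : 𝔸) : 𝔸 := q * p - p * q

/-- `F` function in the tight Trotter bound. -/
def TF (p q : 𝔸) (s : ℝ) : 𝔸 := q + TC q p s - p - TC (-p) q s

def TF1 (p q : 𝔸) (s : ℝ) : 𝔸 := TC q (Tc1 p q) s - TC (-p) (Tc1 p q) s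

def TF2 (p q : 𝔸) (s : ℝ) : 𝔸 :=
  TC q (q * Tc1 p q - Tc1 p q * q) s + TC (-p) (p * Tc1 p q - Tc1 p q * p) s

/-- the constant `M`. -/
def TM (p q : 𝔸) : ℝ := ‖q * Tc1 p q - Tc1 p q * q‖ + ‖p * Tc1 p q - Tc1 p q * p‖

lemma TF_zero (p q : 𝔸) : TF p q 0 = 0 := by simp [TF, TC_zero]

lemma TC_neg (m c : 𝔸) (s : ℝ) : TC m (-c) s = - TC m c s := by
  simp [TC, neg_mul, mul_neg]

lemma TF1_zero (p q : 𝔸) : TF1 p q 0 = 0 := by simp [TF1, TC_zero]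

lemma TF_cont (p q : 𝔸) : Continuous (TF p q) := by
  unfold TF
  exact ((continuous_const.add (TC_cont q p)).sub continuous_const).sub (TC_cont (-p) q)

lemma TF1_cont (p q : 𝔸) : Continuous (TF1 p q) :=
  (TC_cont q _).sub (TC_cont (-p) _)

lemma TF_deriv (p q : 𝔸) (s : ℝ) : HasDerivAt (TF p q) (TF1 p q s) s := by
  have h1 := TC_deriv q p s
  have h2 := TC_deriv (-p) q s
  have h := ((h1.const_add q).sub_const p).sub h2
  have e : -p * q - q * -p = Tc1 p q := by simp [Tc1]; abel
  rw [e] at h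
  exact h

lemma TF1_deriv (p q : 𝔸) (s : ℝ) : HasDerivAt (TF1 p q) (TF2 p q s) s := by
  have h := (TC_deriv q (Tc1 p q) s).sub (TC_deriv (-p) (Tc1 p q) s)
  have e : TC (-p) (-p * Tc1 p q - Tc1 p q * -p) s
      = - TC (-p) (p * Tc1 p q - Tc1 p q * p) s := by
    have e2 : -p * Tc1 p q - Tc1 p q * -p = -(p * Tc1 p q - Tc1 p q * p) := by
      simp; abel
    rw [e2, TC_neg]
  rw [e, sub_neg_eq_add] at h
  exact h

lemma TF2_norm_le (p q : 𝔸) (hp : star p = -p) (hq : star q = -q) (s : ℝ) :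
    ‖TF2 p q s‖ ≤ TM p q := by
  have hp' : star (-p) = -(-p) := by rw [star_neg, hp]
  exact (norm_add_le _ _).trans
    (add_le_add (TC_norm_le q _ hq s) (TC_norm_le (-p) _ hp' s))

lemma TF1_norm_le (p q : 𝔸) (hp : star p = -p) (hq : star q = -q) {s : ℝ} (hs : 0 ≤ s) :
    ‖TF1 p q s‖ ≤ TM p q * s := by
  have key := Convex.norm_image_sub_le_of_norm_hasDerivWithin_le
    (f := TF1 p q) (f' := TF2 p q) (s := Set.Icc 0 s) (C := TM p q)
    (fun u _ => (TF1_deriv p q u).hasDerivWithinAt)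
    (fun u _ => TF2_norm_le p q hp hq u) (convex_Icc 0 s)
    (Set.left_mem_Icc.mpr hs) (Set.right_mem_Icc.mpr hs)
  rw [TF1_zero] at key
  simpa [abs_of_nonneg hs] using key

lemma TF_norm_le (p q : 𝔸) (hp : star p = -p) (hq : star q = -q) {s : ℝ} (hs : 0 ≤ s) :
    ‖TF p q s‖ ≤ TM p q * (s ^ 2 / 2) := by
  have hint : IntervalIntegrable (TF1 p q) MeasureTheory.volume 0 s :=
    (TF1_cont p q).intervalIntegrable 0 s
  have hftc : ∫ u in (0:ℝ)..s, TF1 p q u = TF p q s - TF p q 0 :=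
    intervalIntegral.integral_eq_sub_of_hasDerivAt
      (fun u _ => TF_deriv p q u) hint
  rw [TF_zero, sub_zero] at hftc
  rw [← hftc]
  calc ‖∫ u in (0:ℝ)..s, TF1 p q u‖ ≤ ∫ u in (0:ℝ)..s, ‖TF1 p q u‖ :=
        intervalIntegral.norm_integral_le_integral_norm hs
    _ ≤ ∫ u in (0:ℝ)..s, TM p q * u := by
        apply intervalIntegral.integral_mono_on hs
          ((TF1_cont p q).norm.intervalIntegrable 0 s)
          ((continuous_const.mul continuous_id).intervalIntegrable 0 s)
        exact fun u hu => TF1_norm_le p q hp hq hu.1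
    _ = TM p q * (s ^ 2 / 2) := by
        rw [intervalIntegral.integral_const_mul]
        congr 1
        simpa using integral_id (a := (0:ℝ)) (b := s)

/-- The Strang splitting. -/
def TS (p q : 𝔸) (s : ℝ) : 𝔸 := TE p s * TE q s * TE p s

lemma TS_zero (p q : 𝔸) : TS p q 0 = 1 := by simp [TS, TE_zero]

lemma TS_cont (p q : 𝔸) : Continuous (TS p q) :=
  ((TE_cont p).mul (TE_cont q)).mul (TE_cont p)

lemma TS_deriv (p q : 𝔸) (s : ℝ) :
    HasDerivAt (TS p q)
      ((p + p + q) * TS p q s + TE p s * TF p q s * (TE q s * TE p s)) s := by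
  have h := ((TE_deriv p s).mul (TE_deriv q s)).mul (TE_deriv p s)
  convert h using 1
  · rfl
  have hEp := TE_mul_TE p s
  have hEq' := TE_mul_TE' q s
  have c1 : ∀ z : 𝔸, TE (-q) s * (TE q s * z) = z := fun z => by
    rw [← mul_assoc, hEq', one_mul]
  have c2 : ∀ z : 𝔸, TE p s * (TE (-p) s * z) = z := fun z => by
    rw [← mul_assoc, hEp, one_mul]
  have hcp : ∀ z : 𝔸, TE p s * (p * z) = p * (TE p s * z) := fun z => by
    rw [← mul_assoc, TE_comm, mul_assoc]
  simp only [TS, TF, TC, Tc1, neg_neg, mul_add, add_mul, mul_sub, sub_mul,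
    mul_assoc, c1, c2, hcp, Pi.mul_apply]
  abel

lemma norm_sandwich (u e1 e2 e3 f : 𝔸) (hu : ‖u‖ ≤ 1) (h1 : ‖e1‖ ≤ 1)
    (h2 : ‖e2‖ ≤ 1) (h3 : ‖e3‖ ≤ 1) : ‖u * (e1 * f * (e2 * e3))‖ ≤ ‖f‖ := by
  have l1 : ‖e2 * e3‖ ≤ 1 :=
    (norm_mul_le _ _).trans (mul_le_one₀ h2 (norm_nonneg _) h3)
  have l2 : ‖e1 * f‖ ≤ ‖f‖ :=
    (norm_mul_le _ _).trans (mul_le_of_le_one_left (norm_nonneg f) h1)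
  have l3 : ‖e1 * f * (e2 * e3)‖ ≤ ‖f‖ := by
    have := mul_le_mul l2 l1 (norm_nonneg _) (norm_nonneg f)
    rw [mul_one] at this
    exact (norm_mul_le _ _).trans this
  exact (norm_mul_le _ _).trans
    ((mul_le_of_le_one_left (norm_nonneg _) hu).trans l3)

theorem abstract_bound (p q : 𝔸) (hp : star p = -p) (hq : star q = -q)
    (t : ℝ) (ht : 0 ≤ t) :
    ‖TE (p + p + q) t - TS p q t‖ ≤ TM p q * (t ^ 3 / 6) := by
  set H := p + p + q with hH
  have hHs : star H = -H := by
    rw [hH, star_add, star_add, hp, hq]; abel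
  have hps : star (-p) = -(-p) := by rw [star_neg, hp]
  set W := fun s : ℝ => TE p s * TF p q s * (TE q s * TE p s) with hW
  have hG : ∀ s : ℝ, HasDerivAt (fun s => TE H (t - s) * TS p q s)
      (TE H (t - s) * W s) s := by
    intro s
    have h1 : HasDerivAt (fun s : ℝ => t - s) (-1) s := (hasDerivAt_id s).const_sub t
    have h2 : HasDerivAt (fun s : ℝ => TE H (t - s))
        ((-1 : ℝ) • (H * TE H (t - s))) s := (TE_deriv H (t - s)).scomp s h1
    have h3 := h2.mul (TS_deriv p q s)
    rw [← hH] at h3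
    convert h3 using 1
    · rfl
    have hcm : ∀ z : 𝔸, TE H (t - s) * (H * z) = H * (TE H (t - s) * z) := fun z => by
      rw [← mul_assoc, TE_comm, mul_assoc]
    simp only [hW, neg_one_smul, neg_mul, mul_add, mul_assoc, hcm]
    abel
  have hWcont : Continuous W :=
    ((TE_cont p).mul (TF_cont p q)).mul ((TE_cont q).mul (TE_cont p))
  have hG'cont : Continuous (fun s => TE H (t - s) * W s) :=
    (((TE_cont H).comp (continuous_const.sub continuous_id)).mul hWcont)
  have hftc : ∫ s in (0:ℝ)..t, TE H (t - s) * W s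
      = TE H (t - t) * TS p q t - TE H (t - 0) * TS p q 0 :=
    intervalIntegral.integral_eq_sub_of_hasDerivAt (fun s _ => hG s)
      (hG'cont.intervalIntegrable 0 t)
  rw [sub_self, TE_zero, one_mul, sub_zero, TS_zero, mul_one] at hftc
  have hdiff : TE H t - TS p q t = -∫ s in (0:ℝ)..t, TE H (t - s) * W s := by
    rw [hftc]; abel
  rw [hdiff, norm_neg]
  calc ‖∫ s in (0:ℝ)..t, TE H (t - s) * W s‖
      ≤ ∫ s in (0:ℝ)..t, ‖TE H (t - s) * W s‖ :=
        intervalIntegral.norm_integral_le_integral_norm ht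
    _ ≤ ∫ s in (0:ℝ)..t, TM p q * (s ^ 2 / 2) := by
        apply intervalIntegral.integral_mono_on ht
          ((((TE_cont H).comp (continuous_const.sub continuous_id)).mul hWcont).norm.intervalIntegrable 0 t)
          ((continuous_const.mul ((continuous_pow 2).div_const 2)).intervalIntegrable 0 t)
        intro s hs
        have hbound : ‖TE H (t - s) * W s‖ ≤ ‖TF p q s‖ := by
          rw [hW]
          exact norm_sandwich _ _ _ _ _ (TE_norm_le H hHs _) (TE_norm_le p hp _)
            (TE_norm_le q hq _) (TE_norm_le p hp _)
        exact hbound.trans (TF_norm_le p q hp hq hs.1)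
    _ = TM p q * (t ^ 3 / 6) := by
        rw [intervalIntegral.integral_const_mul]
        congr 1
        rw [intervalIntegral.integral_div]
        rw [integral_pow]
        ring

end Trotter
end TrotterAux

open Matrix

/-- Operator (spectral) norm induced by the Euclidean vector norm. -/
noncomputable def opNorm {d : ℕ} (A : Matrix (Fin d) (Fin d) ℂ) : ℝ :=
  ‖Matrix.toEuclideanCLM (𝕜 := ℂ) A‖

/-- Commutator of matrices. -/
noncomputable def commBr {d : ℕ} (A B : Matrix (Fin d) (Fin d) ℂ) : Matrix (Fin d) (Fin d) ℂ :=
  A * B - B * A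

open scoped Matrix.Norms.L2Operator in
theorem stmt_16_helper {d : ℕ} (A B : Matrix (Fin d) (Fin d) ℂ)
    (hA : A.IsHermitian) (hB : B.IsHermitian) (t : ℝ) (ht : 0 ≤ t) :
    ‖NormedSpace.exp ((Complex.I * t) • (A + B))
        - NormedSpace.exp ((Complex.I * t / 2) • A)
          * NormedSpace.exp ((Complex.I * t) • B)
          * NormedSpace.exp ((Complex.I * t / 2) • A)‖
      ≤ t ^ 3 / 12 * ‖commBr B (commBr B A)‖
        + t ^ 3 / 24 * ‖commBr A (commBr A B)‖ := by
  classical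
  letI : NormedStarGroup (Matrix (Fin d) (Fin d) ℂ) :=
    ⟨fun x => by rw [Matrix.star_eq_conjTranspose]; exact (Matrix.l2_opNorm_conjTranspose x).le⟩
  have hsa : star A = A := by rw [Matrix.star_eq_conjTranspose]; exact hA
  have hsb : star B = B := by rw [Matrix.star_eq_conjTranspose]; exact hB
  set x : Matrix (Fin d) (Fin d) ℂ := Complex.I • A with hx
  set y : Matrix (Fin d) (Fin d) ℂ := Complex.I • B with hy
  set p : Matrix (Fin d) (Fin d) ℂ := (2⁻¹ : ℝ) • x with hpdef
  clear_value x y p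
  have h2 : ∀ c : Matrix (Fin d) (Fin d) ℂ, (2⁻¹ : ℝ) • c = (2⁻¹ : ℂ) • c := fun c => by
    rw [← Complex.coe_smul]; norm_num
  have hp : star p = -p := by
    rw [hpdef, h2, star_smul, hx, star_smul, hsa]
    simp [Complex.star_def, Complex.conj_I, smul_smul]
  have hq : star y = -y := by
    rw [hy, star_smul, hsb]
    simp [Complex.star_def, Complex.conj_I]
  have hEE : (NormedSpace.exp : Matrix (Fin d) (Fin d) ℂ → Matrix (Fin d) (Fin d) ℂ)
      = NormedSpace.exp :=
    rfl
  have hsm : ∀ (c : Matrix (Fin d) (Fin d) ℂ) (r : ℝ),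
      r • (Complex.I • c) = (Complex.I * r) • c := by
    intro c r
    rw [← Complex.coe_smul, smul_smul, mul_comm]
  -- identify the three exponentials
  have hppq : p + p + y = Complex.I • (A + B) := by
    rw [hpdef, ← add_smul]
    norm_num [hx, hy, smul_add]
  have e1 : NormedSpace.exp ((Complex.I * t) • (A + B)) = Trotter.TE (p + p + y) t := by
    rw [Trotter.TE, ← hEE, hppq, hsm]
  have e2 : NormedSpace.exp ((Complex.I * t / 2) • A) = Trotter.TE p t := by
    rw [Trotter.TE, ← hEE]
    congr 1
    rw [hpdef, hx, smul_smul, hsm]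
    congr 1
    push_cast
    ring
  have e3 : NormedSpace.exp ((Complex.I * t) • B) = Trotter.TE y t := by
    rw [Trotter.TE, ← hEE, hy, hsm]
  -- commutator computations
  have hyx : y * x - x * y = A * B - B * A := by
    rw [hx, hy]
    simp only [smul_mul_assoc, mul_smul_comm, smul_smul, Complex.I_mul_I, neg_one_smul]
    abel
  have hc1 : Trotter.Tc1 p y = (2⁻¹ : ℝ) • (A * B - B * A) := by
    rw [Trotter.Tc1, hpdef]
    simp only [mul_smul_comm, smul_mul_assoc, ← smul_sub]
    rw [hyx]
  have hterm1 : y * Trotter.Tc1 p y - Trotter.Tc1 p y * y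
      = ((2⁻¹ : ℂ) * Complex.I)
          • (B * (A * B - B * A) - (A * B - B * A) * B) := by
    rw [hc1, hy]
    simp only [h2, mul_smul_comm, smul_mul_assoc, smul_smul, ← smul_sub]
    match_scalars <;> ring
  have hterm2 : p * Trotter.Tc1 p y - Trotter.Tc1 p y * p
      = ((4⁻¹ : ℂ) * Complex.I)
          • (A * (A * B - B * A) - (A * B - B * A) * A) := by
    rw [hc1, hpdef, hx]
    simp only [h2, mul_smul_comm, smul_mul_assoc, smul_smul, ← smul_sub]
    match_scalars <;> ring
  have hN1 : ‖commBr B (commBr B A)‖ = ‖B * (A * B - B * A) - (A * B - B * A) * B‖ := by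
    rw [show commBr B (commBr B A)
        = -(B * (A * B - B * A) - (A * B - B * A) * B) by unfold commBr; noncomm_ring]
    rw [norm_neg]
  have hN2 : ‖commBr A (commBr A B)‖ = ‖A * (A * B - B * A) - (A * B - B * A) * A‖ := by
    rw [show commBr A (commBr A B)
        = A * (A * B - B * A) - (A * B - B * A) * A by unfold commBr; noncomm_ring]
  have hTM : Trotter.TM p y = 2⁻¹ * ‖commBr B (commBr B A)‖
      + 4⁻¹ * ‖commBr A (commBr A B)‖ := by
    rw [Trotter.TM, hterm1, hterm2, hN1, hN2, norm_smul, norm_smul]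
    norm_num
  have habs := Trotter.abstract_bound p y hp hq t ht
  rw [e1, e2, e3]
  calc ‖Trotter.TE (p + p + y) t - Trotter.TE p t * Trotter.TE y t * Trotter.TE p t‖
      = ‖Trotter.TE (p + p + y) t - Trotter.TS p y t‖ := by rw [Trotter.TS]
    _ ≤ Trotter.TM p y * (t ^ 3 / 6) := habs
    _ = t ^ 3 / 12 * ‖commBr B (commBr B A)‖
        + t ^ 3 / 24 * ‖commBr A (commBr A B)‖ := by rw [hTM]; ring

/-- Second-order Suzuki–Trotter error bound: for Hermitian `A, B` with `H = A + B`
and `S₂(t) = e^{itA/2} e^{itB} e^{itA/2}`,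
`‖e^{itH} - S₂(t)‖ ≤ (t³/12) ‖[B,[B,A]]‖ + (t³/24) ‖[A,[A,B]]‖` for all `t ≥ 0`. -/
theorem stmt_16 {d : ℕ} (A B : Matrix (Fin d) (Fin d) ℂ)
    (hA : A.IsHermitian) (hB : B.IsHermitian) (t : ℝ) (ht : 0 ≤ t) :
    opNorm (NormedSpace.exp ((Complex.I * t) • (A + B))
        - NormedSpace.exp ((Complex.I * t / 2) • A)
          * NormedSpace.exp ((Complex.I * t) • B)
          * NormedSpace.exp ((Complex.I * t / 2) • A))
      ≤ t ^ 3 / 12 * opNorm (commBr B (commBr B A))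
        + t ^ 3 / 24 * opNorm (commBr A (commBr A B)) :=
  stmt_16_helper A B hA hB t ht
end
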